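/- For integers p, q, k with p > 0 and (q, k) ≠ (0, 0), the image of the generator a in the group H(p,q,k) has infinite order. -/
import Mathlib


/-- Generators `a`, `b`, `s` of the presented group `H(p,q,k)`. -/
inductive Gen3 : Type
  | a | b | s

open FreeGroup in
/-- The relators `b⁻¹aba⁻¹` and `s⁻¹aᵖs b⁻ᵏ a⁻ᵠ` of `H(p,q,k)`. -/
def relsHpqk (p q k : ℤ) : Set (FreeGroup Gen3) :=
  {(of Gen3.b)⁻¹ * of Gen3.a * of Gen3.b * (of Gen3.a)⁻¹,
   (of Gen3.s)⁻¹ * (of Gen3.a) ^ p * of Gen3.s * ((of Gen3.b) ^ k)⁻¹ * ((of Gen3.a) ^ q)⁻¹}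

/-- The group `H(p,q,k) = ⟨a, b, s ∣ b⁻¹ab = a, s⁻¹aᵖs = aᵠbᵏ⟩`. -/
abbrev Hpqk (p q k : ℤ) : Type := PresentedGroup (relsHpqk p q k)

section Aux

open Complex SemidirectProduct Multiplicative

lemma aux_denom_ne_zero {q k : ℤ} (h : (q, k) ≠ (0, 0)) :
    ((q : ℂ) + (k : ℂ) * Complex.I) ≠ 0 := by
  intro h0
  apply h
  have hre := congrArg Complex.re h0
  have him := congrArg Complex.im h0
  simp at hre him
  exact Prod.ext (by exact_mod_cast hre) (by exact_mod_cast him)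

/-- The multiplier `w = p / (q + k i)`. -/
noncomputable def wC (p q k : ℤ) : ℂ := (p : ℂ) / ((q : ℂ) + (k : ℂ) * Complex.I)

lemma wC_ne_zero {p q k : ℤ} (hp : 0 < p) (h : (q, k) ≠ (0, 0)) : wC p q k ≠ 0 := by
  apply div_ne_zero
  · exact_mod_cast hp.ne'
  · exact aux_denom_ne_zero h

/-- The automorphism of `ℂ` (additively) given by multiplication by `w`. -/
noncomputable def psiC (p q k : ℤ) (hp : 0 < p) (h : (q, k) ≠ (0, 0)) :
    MulAut (Multiplicative ℂ) :=
  AddEquiv.toMultiplicative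
    ((DistribMulAction.toAddAut ℂˣ ℂ (Units.mk0 (wC p q k) (wC_ne_zero hp h)) : ℂ ≃+ ℂ))

/-- The target group: `ℂ ⋊ ℤ` with `ℤ` acting by powers of multiplication by `w`. -/
noncomputable abbrev GT (p q k : ℤ) (hp : 0 < p) (h : (q, k) ≠ (0, 0)) : Type :=
  Multiplicative ℂ ⋊[zpowersHom (MulAut (Multiplicative ℂ)) (psiC p q k hp h)] Multiplicative ℤ

noncomputable def fGen (p q k : ℤ) (hp : 0 < p) (h : (q, k) ≠ (0, 0)) :
    Gen3 → GT p q k hp h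
  | Gen3.a => inl (ofAdd (1 : ℂ))
  | Gen3.b => inl (ofAdd Complex.I)
  | Gen3.s => inr (ofAdd (1 : ℤ))

end Aux

open Complex SemidirectProduct Multiplicative in
/-- For `p > 0` and `(q, k) ≠ (0, 0)`, the image of the generator `a` in `H(p,q,k)`
has infinite order. -/
theorem a_infinite_order (p q k : ℤ) (hp : 0 < p) (hqk : (q, k) ≠ (0, 0)) :
    ¬ IsOfFinOrder (PresentedGroup.of (rels := relsHpqk p q k) Gen3.a) := by
  set f := fGen p q k hp hqk with hf
  have hrels : ∀ r ∈ relsHpqk p q k, FreeGroup.lift f r = 1 := by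
    intro r hr
    rcases hr with hr | hr
    · subst hr
      simp only [map_mul, map_inv, FreeGroup.lift_apply_of, hf, fGen]
      rw [← map_inv inl, ← map_inv inl, ← map_mul inl, ← map_mul inl, ← map_mul inl]
      rw [show (ofAdd Complex.I)⁻¹ * ofAdd (1:ℂ) * ofAdd Complex.I * (ofAdd (1:ℂ))⁻¹
            = (1 : Multiplicative ℂ) by
        rw [← ofAdd_neg, ← ofAdd_neg, ← ofAdd_add, ← ofAdd_add, ← ofAdd_add]
        norm_num]
      exact map_one inl
    · rw [Set.mem_singleton_iff] at hr
      subst hr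
      simp only [map_mul, map_inv, map_zpow, FreeGroup.lift_apply_of, hf, fGen]
      have hA : (inl (ofAdd (1:ℂ)) : GT p q k hp hqk) ^ p = inl (ofAdd (p : ℂ)) := by
        rw [← map_zpow inl]
        congr 1
        rw [← ofAdd_zsmul]
        norm_num
      have hAq : (inl (ofAdd (1:ℂ)) : GT p q k hp hqk) ^ q = inl (ofAdd (q : ℂ)) := by
        rw [← map_zpow inl]
        congr 1
        rw [← ofAdd_zsmul]
        norm_num
      have hBk : (inl (ofAdd Complex.I) : GT p q k hp hqk) ^ k
          = inl (ofAdd ((k : ℂ) * Complex.I)) := by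
        rw [← map_zpow inl]
        congr 1
        rw [← ofAdd_zsmul]
        norm_num
      rw [hA, hAq, hBk]
      have key : (inr (ofAdd (1:ℤ)))⁻¹ * (inl (ofAdd (p : ℂ)) : GT p q k hp hqk)
            * inr (ofAdd (1:ℤ))
          = inl (ofAdd ((q : ℂ) + (k : ℂ) * Complex.I)) := by
        rw [← map_inv inr, ← inl_aut_inv]
        congr 1
        show (zpowersHom (MulAut (Multiplicative ℂ)) (psiC p q k hp hqk)
          (ofAdd (1:ℤ)))⁻¹ (ofAdd (p : ℂ)) = ofAdd ((q : ℂ) + (k : ℂ) * Complex.I)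
        have h1 : zpowersHom (MulAut (Multiplicative ℂ)) (psiC p q k hp hqk)
            (ofAdd (1:ℤ)) = psiC p q k hp hqk := by
          simp [zpowersHom_apply]
        rw [h1]
        show ofAdd ((wC p q k)⁻¹ * (p : ℂ)) = ofAdd ((q : ℂ) + (k : ℂ) * Complex.I)
        congr 1
        rw [wC]
        have hp' : (p : ℂ) ≠ 0 := by exact_mod_cast hp.ne'
        field_simp
      rw [key, ← map_inv inl, ← map_inv inl, ← map_mul inl, ← map_mul inl]
      rw [show ofAdd ((q : ℂ) + (k : ℂ) * Complex.I) * (ofAdd ((k:ℂ) * Complex.I))⁻¹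
            * (ofAdd (q:ℂ))⁻¹ = (1 : Multiplicative ℂ) by
        rw [← ofAdd_neg, ← ofAdd_neg, ← ofAdd_add, ← ofAdd_add]
        norm_num]
      exact map_one inl
  set F := PresentedGroup.toGroup hrels with hF
  intro hfin
  have himg : IsOfFinOrder (F (PresentedGroup.of Gen3.a)) := F.isOfFinOrder hfin
  rw [hF, PresentedGroup.toGroup.of, hf] at himg
  obtain ⟨n, hn, hpow⟩ := isOfFinOrder_iff_pow_eq_one.mp himg
  rw [fGen, ← map_pow inl] at hpow
  have : (ofAdd (1:ℂ)) ^ n = 1 := by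
    have := inl_injective (hpow.trans (map_one inl).symm)
    exact this
  rw [← ofAdd_nsmul] at this
  have hcn : ((n : ℂ)) = 0 := by
    have := ofAdd_eq_one.mp (by simpa using this)
    simpa using this
  exact_mod_cast hn.ne' (by exact_mod_cast hcn)
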